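/- For two distinct observations x_1 ≠ x_2 from a k-component Gaussian mixture with prior π(μ,σ) = 1/σ and proper independent priors on the remaining parameters, the marginal likelihood M_k(x_1,x_2) is finite, hence the posterior distribution is proper. -/

import Mathlib

/-!
Fix the parameters `θ` carrying the proper prior. Expanding the product of the two mixture
densities gives a sum over pairs of components `(i, j)` with weights `pᵢ pⱼ`. Integrating out the
location `μ` turns the product of the two Gaussian densities into a Gaussian density in
`x₁ - x₂`, with mean `σ (αᵢ - αⱼ)` and standard deviation `σ √(τᵢ² + τⱼ²)`. After the
substitution `v = σ⁻¹` the scale integral against `σ⁻¹ dσ` becomes the integral over `v > 0` of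
a Gaussian density evaluated at `(x₁ - x₂) v`, which is at most `|x₁ - x₂|⁻¹`. This bound is
uniform in `θ`, and the prior on `θ` has total mass one.
-/

open MeasureTheory Finset

/-- The Gaussian density with mean `m` and standard deviation `s`. -/
noncomputable def normalPDF (m s x : ℝ) : ℝ :=
  (Real.sqrt (2 * Real.pi) * s)⁻¹ * Real.exp (-((x - m) ^ 2 / (2 * s ^ 2)))
open Real ENNReal
open scoped NNReal

lemma normalPDF_nonneg (m x : ℝ) {s : ℝ} (hs : 0 ≤ s) : 0 ≤ normalPDF m s x := by
  unfold normalPDF; positivity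

@[fun_prop]
lemma Measurable.normalPDF {α : Type*} [MeasurableSpace α] {m s x : α → ℝ}
    (hm : Measurable m) (hs : Measurable s) (hx : Measurable x) :
    Measurable fun a ↦ normalPDF (m a) (s a) (x a) := by
  unfold _root_.normalPDF; fun_prop

lemma normalPDF_eq_gaussianPDFReal (m x : ℝ) {s : ℝ} (hs : 0 ≤ s) :
    normalPDF m s x = ProbabilityTheory.gaussianPDFReal m (s ^ 2).toNNReal x := by
  rw [normalPDF, ProbabilityTheory.gaussianPDFReal, Real.coe_toNNReal _ (sq_nonneg s),
    sqrt_mul (by positivity : (0 : ℝ) ≤ 2 * π) (s ^ 2), sqrt_sq hs, neg_div]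

lemma lintegral_normalPDF (m : ℝ) {s : ℝ} (hs : 0 < s) :
    ∫⁻ x, ENNReal.ofReal (normalPDF m s x) = 1 := by
  simp_rw [normalPDF_eq_gaussianPDFReal m _ hs.le]
  exact ProbabilityTheory.lintegral_gaussianPDFReal_eq_one m
    (Real.toNNReal_pos.2 (by positivity)).ne'

lemma normalPDF_mul_normalPDF (a₁ a₂ x₁ x₂ μ : ℝ) {s₁ s₂ : ℝ} (h₁ : 0 < s₁) (h₂ : 0 < s₂) :
    normalPDF (μ + a₁) s₁ x₁ * normalPDF (μ + a₂) s₂ x₂ =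
      normalPDF (a₁ - a₂) √(s₁ ^ 2 + s₂ ^ 2) (x₁ - x₂) *
        normalPDF (((x₁ - a₁) * s₂ ^ 2 + (x₂ - a₂) * s₁ ^ 2) / (s₁ ^ 2 + s₂ ^ 2))
          (s₁ * s₂ / √(s₁ ^ 2 + s₂ ^ 2)) μ := by
  have hS : 0 < √(s₁ ^ 2 + s₂ ^ 2) := sqrt_pos.mpr (by positivity)
  have hS2 : √(s₁ ^ 2 + s₂ ^ 2) ^ 2 = s₁ ^ 2 + s₂ ^ 2 := sq_sqrt (by positivity)
  have h2π : 0 < √(2 * π) := sqrt_pos.mpr (by positivity)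
  unfold normalPDF
  rw [mul_mul_mul_comm, mul_mul_mul_comm _ (exp _), ← exp_add, ← exp_add, div_pow, hS2]
  congr 1
  · field_simp
  · congr 1
    field_simp
    ring

lemma lintegral_normalPDF_mul_normalPDF (a₁ a₂ x₁ x₂ : ℝ) {s₁ s₂ : ℝ} (h₁ : 0 < s₁)
    (h₂ : 0 < s₂) :
    ∫⁻ μ, ENNReal.ofReal (normalPDF (μ + a₁) s₁ x₁ * normalPDF (μ + a₂) s₂ x₂) =
      ENNReal.ofReal (normalPDF (a₁ - a₂) √(s₁ ^ 2 + s₂ ^ 2) (x₁ - x₂)) := by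
  simp_rw [normalPDF_mul_normalPDF a₁ a₂ x₁ x₂ _ h₁ h₂,
    ENNReal.ofReal_mul (normalPDF_nonneg _ _ (sqrt_nonneg _))]
  rw [lintegral_const_mul' _ _ ofReal_ne_top, lintegral_normalPDF _ (by positivity), mul_one]

lemma inv_mul_normalPDF_mul_mul (c t d : ℝ) {σ : ℝ} (hσ : σ ≠ 0) :
    σ⁻¹ * normalPDF (σ * c) (σ * t) d = (σ ^ 2)⁻¹ * normalPDF c t (d * σ⁻¹) := by
  unfold normalPDF
  have : (d - σ * c) ^ 2 / (2 * (σ * t) ^ 2) = (d * σ⁻¹ - c) ^ 2 / (2 * t ^ 2) := by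
    field_simp
  rw [this]
  field_simp

lemma lintegral_comp_mul_left_real (g : ℝ → ℝ≥0∞) {a : ℝ} (ha : a ≠ 0) :
    ∫⁻ x, g (a * x) = ENNReal.ofReal |a⁻¹| * ∫⁻ y, g y := by
  rw [← smul_eq_mul, ← lintegral_smul_measure, ← Real.map_volume_mul_left ha]
  exact (lintegral_map_equiv g (MeasurableEquiv.mulLeft₀ a ha)).symm

lemma setLIntegral_Ioi_inv_sq_mul_comp_inv (g : ℝ → ℝ≥0∞) :
    ∫⁻ x in Set.Ioi 0, ENNReal.ofReal (x ^ 2)⁻¹ * g x⁻¹ = ∫⁻ y in Set.Ioi 0, g y := by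
  have himage : Inv.inv '' Set.Ioi (0 : ℝ) = Set.Ioi 0 := by
    rw [Set.image_inv_eq_inv]; ext; simp
  conv_rhs => rw [← himage]
  rw [lintegral_image_eq_lintegral_abs_deriv_mul measurableSet_Ioi
    (fun x hx ↦ (hasDerivAt_inv (ne_of_gt hx)).hasDerivWithinAt) inv_injective.injOn]
  simp only [abs_neg, abs_inv, abs_sq]

lemma setLIntegral_Ioi_inv_mul_normalPDF_le (c t : ℝ) {d : ℝ} (hd : d ≠ 0) (ht : 0 < t) :
    ∫⁻ σ in Set.Ioi 0, ENNReal.ofReal (σ⁻¹ * normalPDF (σ * c) (σ * t) d) ≤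
      ENNReal.ofReal |d|⁻¹ :=
  calc ∫⁻ σ in Set.Ioi 0, ENNReal.ofReal (σ⁻¹ * normalPDF (σ * c) (σ * t) d)
      = ∫⁻ σ in Set.Ioi 0, ENNReal.ofReal (σ ^ 2)⁻¹ * ENNReal.ofReal (normalPDF c t (d * σ⁻¹)) :=
        setLIntegral_congr_fun measurableSet_Ioi fun σ hσ ↦ by
          rw [inv_mul_normalPDF_mul_mul c t d (ne_of_gt hσ), ENNReal.ofReal_mul (by positivity)]
    _ = ∫⁻ v in Set.Ioi 0, ENNReal.ofReal (normalPDF c t (d * v)) :=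
        setLIntegral_Ioi_inv_sq_mul_comp_inv fun v ↦ ENNReal.ofReal (normalPDF c t (d * v))
    _ ≤ ∫⁻ v, ENNReal.ofReal (normalPDF c t (d * v)) := setLIntegral_le_lintegral _ _
    _ = ENNReal.ofReal |d|⁻¹ := by
        rw [lintegral_comp_mul_left_real (fun y ↦ ENNReal.ofReal (normalPDF c t y)) hd,
          lintegral_normalPDF c ht, mul_one, abs_inv]

lemma lintegral_mixture_mul_mixture {ι : Type*} [Fintype ι] (p a s : ι → ℝ)
    (hp : ∀ i, 0 ≤ p i) (hs : ∀ i, 0 < s i) (x₁ x₂ : ℝ) :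
    ∫⁻ μ, ENNReal.ofReal ((∑ i, p i * normalPDF (μ + a i) (s i) x₁) *
        ∑ j, p j * normalPDF (μ + a j) (s j) x₂) =
      ∑ i, ∑ j, ENNReal.ofReal (p i) * ENNReal.ofReal (p j) *
        ENNReal.ofReal (normalPDF (a i - a j) √(s i ^ 2 + s j ^ 2) (x₁ - x₂)) := by
  have hN : ∀ i μ x, 0 ≤ normalPDF (μ + a i) (s i) x := fun i _ _ ↦ normalPDF_nonneg _ _ (hs i).le
  have hexpand : ∀ μ, ENNReal.ofReal ((∑ i, p i * normalPDF (μ + a i) (s i) x₁) *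
        ∑ j, p j * normalPDF (μ + a j) (s j) x₂) =
      ∑ i, ∑ j, ENNReal.ofReal (p i) * ENNReal.ofReal (p j) *
        ENNReal.ofReal (normalPDF (μ + a i) (s i) x₁ * normalPDF (μ + a j) (s j) x₂) := by
    intro μ
    rw [ENNReal.ofReal_mul (sum_nonneg fun i _ ↦ mul_nonneg (hp i) (hN i μ x₁)),
      ofReal_sum_of_nonneg fun i _ ↦ mul_nonneg (hp i) (hN i μ x₁),
      ofReal_sum_of_nonneg fun j _ ↦ mul_nonneg (hp j) (hN j μ x₂), sum_mul_sum]
    refine sum_congr rfl fun i _ ↦ sum_congr rfl fun j _ ↦ ?_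
    rw [ENNReal.ofReal_mul (hp i), ENNReal.ofReal_mul (hp j), ENNReal.ofReal_mul (hN i μ x₁)]
    ring
  simp_rw [hexpand]
  rw [lintegral_finsetSum _ fun i _ ↦ by fun_prop]
  refine sum_congr rfl fun i _ ↦ ?_
  rw [lintegral_finsetSum _ fun j _ ↦ by fun_prop]
  refine sum_congr rfl fun j _ ↦ ?_
  rw [lintegral_const_mul' _ _ (by finiteness),
    lintegral_normalPDF_mul_normalPDF _ _ _ _ (hs i) (hs j)]

noncomputable def mixturePDF {ι : Type*} [Fintype ι] (p α τ : ι → ℝ) (μ σ x : ℝ) : ℝ :=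
  ∑ i, p i * normalPDF (μ + σ * α i) (σ * τ i) x

lemma lintegral_setLIntegral_mixturePDF_mul_mixturePDF_le {ι : Type*} [Fintype ι]
    (p α τ : ι → ℝ) (hp : ∀ i, 0 ≤ p i) (hpsum : ∑ i, p i = 1) (hτ : ∀ i, 0 < τ i) {x₁ x₂ : ℝ}
    (hx : x₁ ≠ x₂) :
    ∫⁻ μ, ∫⁻ σ in Set.Ioi 0,
        ENNReal.ofReal (mixturePDF p α τ μ σ x₁ * mixturePDF p α τ μ σ x₂ * σ⁻¹) ≤
      ENNReal.ofReal |x₁ - x₂|⁻¹ := by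
  set C := ENNReal.ofReal |x₁ - x₂|⁻¹
  have hinner : ∀ σ ∈ Set.Ioi (0 : ℝ),
      ∫⁻ μ, ENNReal.ofReal (mixturePDF p α τ μ σ x₁ * mixturePDF p α τ μ σ x₂ * σ⁻¹) =
        ∑ i, ∑ j, ENNReal.ofReal (p i) * ENNReal.ofReal (p j) *
          ENNReal.ofReal
            (σ⁻¹ * normalPDF (σ * (α i - α j)) (σ * √(τ i ^ 2 + τ j ^ 2)) (x₁ - x₂)) := by
    intro σ hσ
    simp_rw [ENNReal.ofReal_mul' (inv_nonneg.2 (le_of_lt hσ))]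
    rw [lintegral_mul_const' _ _ ofReal_ne_top]
    unfold mixturePDF
    rw [lintegral_mixture_mul_mixture p (σ * α ·) (σ * τ ·) hp (fun i ↦ mul_pos hσ (hτ i)),
      sum_mul]
    refine sum_congr rfl fun i _ ↦ ?_
    rw [sum_mul]
    refine sum_congr rfl fun j _ ↦ ?_
    have hsqrt : √((σ * τ i) ^ 2 + (σ * τ j) ^ 2) = σ * √(τ i ^ 2 + τ j ^ 2) := by
      rw [mul_pow, mul_pow, ← mul_add, sqrt_mul (sq_nonneg σ), sqrt_sq (le_of_lt hσ)]
    rw [hsqrt, ← mul_sub, mul_assoc, ← ENNReal.ofReal_mul' (inv_nonneg.2 (le_of_lt hσ)),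
      mul_comm σ⁻¹]
  have hweights : ∑ i, ∑ j, ENNReal.ofReal (p i) * ENNReal.ofReal (p j) = 1 := by
    rw [← sum_mul_sum, ← ofReal_sum_of_nonneg fun i _ ↦ hp i, hpsum, ofReal_one, one_mul]
  rw [lintegral_lintegral_swap (Measurable.aemeasurable (by unfold mixturePDF; fun_prop))]
  calc ∫⁻ σ in Set.Ioi 0, ∫⁻ μ,
        ENNReal.ofReal (mixturePDF p α τ μ σ x₁ * mixturePDF p α τ μ σ x₂ * σ⁻¹)
      = ∑ i, ∑ j, ENNReal.ofReal (p i) * ENNReal.ofReal (p j) *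
          ∫⁻ σ in Set.Ioi 0, ENNReal.ofReal
            (σ⁻¹ * normalPDF (σ * (α i - α j)) (σ * √(τ i ^ 2 + τ j ^ 2)) (x₁ - x₂)) := by
        rw [setLIntegral_congr_fun measurableSet_Ioi hinner,
          lintegral_finsetSum _ fun i _ ↦ by fun_prop]
        refine sum_congr rfl fun i _ ↦ ?_
        rw [lintegral_finsetSum _ fun j _ ↦ by fun_prop]
        exact sum_congr rfl fun j _ ↦ lintegral_const_mul' _ _ (by finiteness)
    _ ≤ ∑ i, ∑ j, ENNReal.ofReal (p i) * ENNReal.ofReal (p j) * C := by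
        gcongr with i _ j _
        exact setLIntegral_Ioi_inv_mul_normalPDF_le _ _ (sub_ne_zero.2 hx)
          (sqrt_pos.2 (by have := hτ i; positivity))
    _ = C := by simp_rw [← sum_mul, hweights, one_mul]

/-- For two distinct observations `x₁ ≠ x₂` from a `k`-component Gaussian mixture, with the
improper prior `π(μ,σ) = 1/σ` and a proper independent prior `Q` on the remaining
parameters, the marginal likelihood is finite: the posterior is proper. -/
theorem gaussian_mixture_posterior_proper_two_obs
    {Θ : Type*} [MeasurableSpace Θ] (Q : Measure Θ) [IsProbabilityMeasure Q] (k : ℕ)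
    (p α τ : Θ → Fin k → ℝ)
    (hp : ∀ θ i, 0 ≤ p θ i) (hpsum : ∀ θ, ∑ i, p θ i = 1)
    (hτ : ∀ θ i, 0 < τ θ i) (x₁ x₂ : ℝ) (hx : x₁ ≠ x₂) :
    ∫⁻ θ, ∫⁻ μ, ∫⁻ σ in Set.Ioi (0 : ℝ),
        ENNReal.ofReal
          ((∑ i, p θ i * normalPDF (μ + σ * α θ i) (σ * τ θ i) x₁) *
            (∑ i, p θ i * normalPDF (μ + σ * α θ i) (σ * τ θ i) x₂) * σ⁻¹)
      ∂volume ∂volume ∂Q < ⊤ :=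
  calc _ ≤ ∫⁻ _, ENNReal.ofReal |x₁ - x₂|⁻¹ ∂Q := lintegral_mono fun θ ↦
        lintegral_setLIntegral_mixturePDF_mul_mixturePDF_le (p θ) (α θ) (τ θ) (hp θ) (hpsum θ)
          (hτ θ) hx
    _ < ⊤ := by simp
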